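/- arXiv:2001.05420 — 4 statements merged into one kernel-verified Lean document; each statement's English description precedes it below -/
import Mathlib

section
/- Unified domain-of-attraction / Pickands–Balkema–de Haan theorem: Let F be a distribution function with upper end-point x₊ and let α ∈ ℝ. Then F ∈ D(G_α) if and only if there exists a function a, positive on (−∞, x₊), such that for every x with 1 + αx > 0 (every x ∈ ℝ when α = 0), F̄(t + x a(t))/F̄(t) → g_α(x) as t ↑ x₊; equivalently, the law of the scaled excess (X − u)/a(u) conditional on X > u converges to the generalised Pareto distribution H_α(x) := 1 − g_α(x) as u ↑ x₊. -/
open Filter Topology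

/-- A (cumulative) distribution function on ℝ. -/
def IsDistFun (F : ℝ → ℝ) : Prop :=
  Monotone F ∧ (∀ x, ContinuousWithinAt F (Set.Ici x) x) ∧
    Tendsto F atBot (𝓝 0) ∧ Tendsto F atTop (𝓝 1)

/-- `F` lies in the domain of attraction of `G`. -/
def MemDomAttr (F G : ℝ → ℝ) : Prop :=
  ∃ a b : ℕ → ℝ, (∀ n, 0 < a n) ∧
    ∀ x : ℝ, ContinuousAt G x →
      Tendsto (fun n => F (a n * x + b n) ^ n) atTop (𝓝 (G x))

/-- `g_α(x) = (1 + αx)^{-1/α}` for `α ≠ 0` (on `{x | 1 + αx > 0}`), and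
`g₀(x) = e^{-x}`. -/
noncomputable def gEVT (α x : ℝ) : ℝ :=
  if α = 0 then Real.exp (-x) else (1 + α * x) ^ (-1 / α)

/-- The extreme-value distribution `G_α`: `exp(-g_α(x))` where `1 + αx > 0`,
`0` to the left of that interval (case `α > 0`), `1` to its right
(case `α < 0`). -/
noncomputable def GEV (α x : ℝ) : ℝ :=
  if 0 < 1 + α * x then Real.exp (-gEVT α x)
  else if 0 < α then 0 else 1

open Classical in
/-- The filter of approach `t ↑ x₊` to the upper end-point of `F`. -/
noncomputable def upperEndFilter (F : ℝ → ℝ) : Filter ℝ :=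
  if BddAbove {x | F x < 1} then 𝓝[<] (sSup {x | F x < 1}) else atTop

/-!
Both sides are equivalent to the sequential tail condition `n (1 - F (aₙ x + bₙ)) → g_α(x)` for
`1 + α x > 0`. There it is `F (aₙ x + bₙ)ⁿ → G_α(x)`, by comparison with `(1 - c / n)ⁿ → e^{-c}`;
off that set `G_α` is `0` or `1`, and monotonicity in `x` does the rest.

Passing between sequences and the continuous parameter `t ↑ x₊` rests on one observation: if
antitone functions `fᵢ` converge pointwise to a continuous, strictly decreasing `g`, then
`fᵢ (zᵢ) → g x` iff `zᵢ → x`. Given `aₙ, bₙ`, set `N(t) = ⌈1 / (1 - F t)⌉` and `a(t) = a_{N(t)}`: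
as `N(t) (1 - F t) → 1 = g_α(0)`, the observation forces `(t - b_{N(t)}) / a(t) → 0`, hence
`N(t) (1 - F (t + x a(t))) → g_α(x)`. Conversely, let `bₙ` be the `(1 - 1/n)`-quantile of `F` and
`aₙ = a(bₙ)`: the tail ratio at `bₙ - aₙ / n` tends to `g_α(0) = 1` and squeezes `n (1 - F bₙ)`
to `1`. Both directions first need `F t → 1` as `t ↑ x₊` (no atom at `x₊`); under the tail-ratio
condition this holds because `1 - F` shrinks by a fixed factor along `t ↦ t + x₀ a(t)`.
-/

section ExtremeValueFunctions

variable {α x : ℝ}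

theorem gEVT_zero (α : ℝ) : gEVT α 0 = 1 := by
  unfold gEVT; split_ifs <;> simp

theorem isOpen_setOf_one_add_mul_pos (α : ℝ) : IsOpen {x : ℝ | 0 < 1 + α * x} :=
  isOpen_lt continuous_const (by fun_prop)

theorem continuousOn_gEVT (α : ℝ) : ContinuousOn (gEVT α) {x | 0 < 1 + α * x} := by
  unfold gEVT
  split_ifs
  · exact (Real.continuous_exp.comp continuous_neg).continuousOn
  · exact ContinuousOn.rpow_const (by fun_prop) fun x hx => Or.inl hx.ne'

theorem strictAntiOn_gEVT (α : ℝ) : StrictAntiOn (gEVT α) {x | 0 < 1 + α * x} := by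
  intro x (hx : 0 < 1 + α * x) y (hy : 0 < 1 + α * y) hxy
  unfold gEVT
  split_ifs with h0
  · exact Real.exp_lt_exp.2 (neg_lt_neg hxy)
  rcases lt_or_gt_of_ne h0 with hα | hα
  · exact Real.rpow_lt_rpow hy.le (by nlinarith) (div_pos_of_neg_of_neg (by norm_num) hα)
  · exact Real.rpow_lt_rpow_of_neg hx (by nlinarith) (div_neg_of_neg_of_pos (by norm_num) hα)

theorem exists_gEVT_eq {v : ℝ} (hv : 0 < v) : ∃ x, 0 < 1 + α * x ∧ gEVT α x = v := by
  rcases eq_or_ne α 0 with rfl | hα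
  · exact ⟨-Real.log v, by simp, by simp [gEVT, Real.exp_log hv]⟩
  have hx : 1 + α * ((v ^ (-α) - 1) / α) = v ^ (-α) := by field_simp; ring
  refine ⟨(v ^ (-α) - 1) / α, by rw [hx]; exact Real.rpow_pos_of_pos hv _, ?_⟩
  rw [gEVT, if_neg hα, hx, ← Real.rpow_mul hv.le, show -α * (-1 / α) = 1 by field_simp,
    Real.rpow_one]

theorem GEV_of_pos (hx : 0 < 1 + α * x) : GEV α x = Real.exp (-gEVT α x) := if_pos hx

theorem continuousAt_GEV (hx : 0 < 1 + α * x) : ContinuousAt (GEV α) x := by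
  have hD := (isOpen_setOf_one_add_mul_pos α).mem_nhds hx
  refine ContinuousAt.congr ?_ (Filter.mem_of_superset hD fun y hy => (GEV_of_pos hy).symm)
  exact (((continuousOn_gEVT α).continuousAt hD).neg).rexp

theorem exists_GEV_eq {p : ℝ} (hp0 : 0 < p) (hp1 : p < 1) :
    ∃ x, 0 < 1 + α * x ∧ GEV α x = p := by
  obtain ⟨x, hx, hgx⟩ := exists_gEVT_eq (α := α) (neg_pos.2 (Real.log_neg hp0 hp1))
  exact ⟨x, hx, by rw [GEV_of_pos hx, hgx, neg_neg, Real.exp_log hp0]⟩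

end ExtremeValueFunctions

theorem tendsto_nat_mul_one_sub_of_tendsto_pow {v : ℕ → ℝ} (hv : ∀ n, 0 ≤ v n) {c : ℝ}
    (h : Tendsto (fun n => v n ^ n) atTop (𝓝 (Real.exp (-c)))) :
    Tendsto (fun n : ℕ => (n : ℝ) * (1 - v n)) atTop (𝓝 c) := by
  -- compare `v n` with `1 - c' / n`, whose `n`-th powers tend to `exp (-c')`
  have hcmp : ∀ c' : ℝ, Tendsto (fun n : ℕ => (1 + -c' / n) ^ n) atTop (𝓝 (Real.exp (-c'))) :=
    fun c' => Real.tendsto_one_add_div_pow_exp (-c')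
  have hbase : ∀ c' : ℝ, ∀ᶠ n : ℕ in atTop, 0 < (n : ℝ) ∧ 0 ≤ 1 + -c' / n := by
    intro c'
    have h1 : Tendsto (fun n : ℕ => 1 + -c' / n) atTop (𝓝 1) := by
      simpa using (tendsto_const_nhds.div_atTop tendsto_natCast_atTop_atTop).const_add (1 : ℝ)
    filter_upwards [eventually_gt_atTop 0, h1.eventually (lt_mem_nhds one_pos)] with n hn h2
    exact ⟨Nat.cast_pos.2 hn, h2.le⟩
  refine tendsto_order.2 ⟨fun c' hc' => ?_, fun c' hc' => ?_⟩
  · filter_upwards [h.eventually_lt (hcmp c') (Real.exp_lt_exp.2 (neg_lt_neg hc')), hbase c']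
      with n hn ⟨hn0, hb⟩
    have := lt_of_pow_lt_pow_left₀ n hb hn
    field_simp at this
    nlinarith
  · filter_upwards [(hcmp c').eventually_lt h (Real.exp_lt_exp.2 (neg_lt_neg hc')), hbase c']
      with n hn ⟨hn0, hb⟩
    have := lt_of_pow_lt_pow_left₀ n (hv n) hn
    field_simp at this
    nlinarith

section AntitoneFamily

variable {ι : Type*} {l : Filter ι} {f : ι → ℝ → ℝ} {g : ℝ → ℝ} {x : ℝ}

theorem tendsto_apply_of_antitone (hf : ∀ᶠ i in l, Antitone (f i))
    (hlim : ∀ᶠ w in 𝓝 x, Tendsto (fun i => f i w) l (𝓝 (g w))) (hg : ContinuousAt g x)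
    {z : ι → ℝ} (hz : Tendsto z l (𝓝 x)) : Tendsto (fun i => f i (z i)) l (𝓝 (g x)) := by
  refine tendsto_order.2 ⟨fun u hu => ?_, fun u hu => ?_⟩
  · obtain ⟨w, ⟨hw, hgw⟩, hxw⟩ := ((hlim.and (hg.eventually (lt_mem_nhds hu))).filter_mono
      nhdsWithin_le_nhds |>.and (self_mem_nhdsWithin : Set.Ioi x ∈ 𝓝[>] x)).exists
    filter_upwards [hf, hw.eventually (lt_mem_nhds hgw), hz.eventually (gt_mem_nhds hxw)]
      with i hfi hi hzi
    exact hi.trans_le (hfi hzi.le)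
  · obtain ⟨w, ⟨hw, hgw⟩, hwx⟩ := ((hlim.and (hg.eventually (gt_mem_nhds hu))).filter_mono
      nhdsWithin_le_nhds |>.and (self_mem_nhdsWithin : Set.Iio x ∈ 𝓝[<] x)).exists
    filter_upwards [hf, hw.eventually (gt_mem_nhds hgw), hz.eventually (lt_mem_nhds hwx)]
      with i hfi hi hzi
    exact (hfi hzi.le).trans_lt hi

theorem tendsto_of_tendsto_apply_of_antitone (hf : ∀ᶠ i in l, Antitone (f i))
    (hlim : ∀ᶠ w in 𝓝 x, Tendsto (fun i => f i w) l (𝓝 (g w))) {D : Set ℝ} (hD : D ∈ 𝓝 x)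
    (hg : StrictAntiOn g D) {z : ι → ℝ} (hfz : Tendsto (fun i => f i (z i)) l (𝓝 (g x))) :
    Tendsto z l (𝓝 x) := by
  have hxD : x ∈ D := mem_of_mem_nhds hD
  have hlimD : ∀ᶠ w in 𝓝 x, Tendsto (fun i => f i w) l (𝓝 (g w)) ∧ w ∈ D := hlim.and hD
  refine tendsto_order.2 ⟨fun u hu => ?_, fun u hu => ?_⟩
  · obtain ⟨w, ⟨hw, hwD⟩, huw, hwx⟩ :=
      ((hlimD.filter_mono nhdsWithin_le_nhds).and (Ioo_mem_nhdsLT hu)).exists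
    filter_upwards [hf, hfz.eventually_lt hw (hg hwD hxD hwx)] with i hfi hi
    exact huw.trans (hfi.reflect_lt hi)
  · obtain ⟨w, ⟨hw, hwD⟩, hxw, hwu⟩ :=
      ((hlimD.filter_mono nhdsWithin_le_nhds).and (Ioo_mem_nhdsGT hu)).exists
    filter_upwards [hf, hw.eventually_lt hfz (hg hxD hwD hxw)] with i hfi hi
    exact (hfi.reflect_lt hi).trans hwu

end AntitoneFamily

instance upperEndFilter.neBot (F : ℝ → ℝ) : (upperEndFilter F).NeBot := by
  unfold upperEndFilter; split_ifs <;> infer_instance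

namespace IsDistFun

variable {F : ℝ → ℝ}

theorem mono (hF : IsDistFun F) : Monotone F := hF.1

theorem nonneg (hF : IsDistFun F) (x : ℝ) : 0 ≤ F x :=
  le_of_tendsto hF.2.2.1 ((eventually_le_atBot x).mono fun _ hy => hF.mono hy)

theorem le_one (hF : IsDistFun F) (x : ℝ) : F x ≤ 1 :=
  ge_of_tendsto hF.2.2.2 ((eventually_ge_atTop x).mono fun _ hy => hF.mono hy)

theorem exists_lt (hF : IsDistFun F) {q : ℝ} (hq : 0 < q) : ∃ t, F t < q :=
  (hF.2.2.1.eventually (gt_mem_nhds hq)).exists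

theorem lt_one_iff_lt_sSup (hF : IsDistFun F) (hb : BddAbove {x | F x < 1}) {t : ℝ} :
    F t < 1 ↔ t < sSup {x | F x < 1} := by
  refine ⟨fun ht => (le_csSup hb ht).lt_of_ne fun hm => ?_, fun ht => ?_⟩
  · -- right-continuity would put points beyond the supremum into the set
    obtain ⟨s, hs, hts⟩ := (((hF.2.1 t).eventually (gt_mem_nhds ht)).filter_mono
      (nhdsWithin_mono _ Set.Ioi_subset_Ici_self) |>.and self_mem_nhdsWithin).exists
    exact (le_csSup hb hs).not_gt (hm ▸ hts)
  · obtain ⟨s, hs, hts⟩ := exists_lt_of_lt_csSup (hF.exists_lt one_pos) ht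
    exact (hF.mono hts.le).trans_lt hs

theorem lt_one_of_not_bddAbove (hF : IsDistFun F) (hb : ¬BddAbove {x | F x < 1}) (t : ℝ) :
    F t < 1 := by
  by_contra! ht
  exact hb ⟨t, fun s (hs : F s < 1) => le_of_lt (hF.mono.reflect_lt (hs.trans_le ht))⟩

theorem eventually_lt_one (hF : IsDistFun F) : ∀ᶠ s in upperEndFilter F, F s < 1 := by
  unfold upperEndFilter
  split_ifs with hb
  · filter_upwards [self_mem_nhdsWithin] with s hs
    exact (hF.lt_one_iff_lt_sSup hb).2 hs
  · exact Eventually.of_forall (hF.lt_one_of_not_bddAbove hb)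

theorem eventually_gt (hF : IsDistFun F) {t : ℝ} (ht : F t < 1) :
    ∀ᶠ s in upperEndFilter F, t < s := by
  unfold upperEndFilter
  split_ifs with hb
  · filter_upwards [Ioo_mem_nhdsLT ((hF.lt_one_iff_lt_sSup hb).1 ht)] with s hs
    exact hs.1
  · exact eventually_gt_atTop t

theorem tendsto_upperEndFilter (hF : IsDistFun F) {ι : Type*} {l : Filter ι} {b : ι → ℝ}
    (hb1 : ∀ᶠ i in l, F (b i) < 1) (hgt : ∀ t, F t < 1 → ∀ᶠ i in l, t < b i) :
    Tendsto b l (upperEndFilter F) := by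
  unfold upperEndFilter
  split_ifs with hb
  · refine tendsto_nhdsWithin_iff.2 ⟨tendsto_order.2 ⟨fun u hu => ?_, fun u hu => ?_⟩, ?_⟩
    · exact hgt u ((hF.lt_one_iff_lt_sSup hb).2 hu)
    · exact hb1.mono fun i hi => ((hF.lt_one_iff_lt_sSup hb).1 hi).trans hu
    · exact hb1.mono fun i hi => (hF.lt_one_iff_lt_sSup hb).1 hi
  · exact tendsto_atTop.2 fun t => (hgt t (hF.lt_one_of_not_bddAbove hb t)).mono fun _ => le_of_lt

theorem tendsto_one_of_exists_tail_lt (hF : IsDistFun F)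
    (h : ∀ ε > 0, ∃ t, F t < 1 ∧ 1 - F t < ε) : Tendsto F (upperEndFilter F) (𝓝 1) := by
  refine tendsto_order.2 ⟨fun u hu => ?_, fun u hu => Eventually.of_forall fun s =>
    (hF.le_one s).trans_lt hu⟩
  obtain ⟨t, ht, htu⟩ := h (1 - u) (sub_pos.2 hu)
  exact (hF.eventually_gt ht).mono fun s hs => by linarith [hF.mono hs.le]

theorem exists_tail_lt_of_contraction (hF : IsDistFun F) {q : ℝ} (hq0 : 0 ≤ q) (hq1 : q < 1)
    (h : ∀ t, F t < 1 → ∃ s, F s < 1 ∧ 1 - F s ≤ q * (1 - F t)) {ε : ℝ} (hε : 0 < ε) :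
    ∃ t, F t < 1 ∧ 1 - F t < ε := by
  have hpow : ∀ k : ℕ, ∃ t, F t < 1 ∧ 1 - F t ≤ q ^ k := by
    intro k
    induction k with
    | zero =>
      obtain ⟨t, ht⟩ := hF.exists_lt one_pos
      exact ⟨t, ht, by linarith [hF.nonneg t]⟩
    | succ k ih =>
      obtain ⟨t, ht, htk⟩ := ih
      obtain ⟨s, hs, hst⟩ := h t ht
      exact ⟨s, hs, hst.trans (by rw [pow_succ']; exact mul_le_mul_of_nonneg_left htk hq0)⟩
  obtain ⟨k, hk⟩ := exists_pow_lt_of_lt_one hε hq1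
  obtain ⟨t, ht, htk⟩ := hpow k
  exact ⟨t, ht, htk.trans_lt hk⟩

theorem tendsto_one_of_tendsto_nat_mul_tail (hF : IsDistFun F) {s : ℕ → ℝ} {c : ℝ} (hc : 0 < c)
    (h : Tendsto (fun n : ℕ => (n : ℝ) * (1 - F (s n))) atTop (𝓝 c)) :
    Tendsto F (upperEndFilter F) (𝓝 1) := by
  have htail : Tendsto (fun n => 1 - F (s n)) atTop (𝓝 0) := by
    refine (h.div_atTop tendsto_natCast_atTop_atTop).congr' ?_
    filter_upwards [eventually_ne_atTop 0] with n hn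
    field_simp
  refine hF.tendsto_one_of_exists_tail_lt fun ε hε => ?_
  obtain ⟨n, hpos, hε⟩ :=
    ((h.eventually (lt_mem_nhds hc)).and (htail.eventually (gt_mem_nhds hε))).exists
  exact ⟨s n, sub_pos.1 (pos_of_mul_pos_right hpos (Nat.cast_nonneg n)), hε⟩

theorem tendsto_one_of_tendsto_tail_ratio (hF : IsDistFun F) {A : ℝ → ℝ} {x c : ℝ}
    (hc0 : 0 < c) (hc1 : c < 1)
    (h : Tendsto (fun t => (1 - F (t + x * A t)) / (1 - F t)) (upperEndFilter F) (𝓝 c)) :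
    Tendsto F (upperEndFilter F) (𝓝 1) := by
  obtain ⟨q, hcq, hq1⟩ := exists_between hc1
  refine hF.tendsto_one_of_exists_tail_lt fun ε hε =>
    hF.exists_tail_lt_of_contraction (hc0.trans hcq).le hq1 (fun t ht => ?_) hε
  obtain ⟨s, hts, hs1, hr0, hrq⟩ := (hF.eventually_gt ht |>.and <| hF.eventually_lt_one.and <|
    (h.eventually (lt_mem_nhds hc0)).and (h.eventually (gt_mem_nhds hcq))).exists
  have hs : 0 < 1 - F s := sub_pos.2 hs1
  refine ⟨s + x * A s, sub_pos.1 ((div_pos_iff_of_pos_right hs).1 hr0), ?_⟩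
  calc 1 - F (s + x * A s) ≤ q * (1 - F s) := ((div_lt_iff₀ hs).1 hrq).le
    _ ≤ q * (1 - F t) := mul_le_mul_of_nonneg_left (by linarith [hF.mono hts.le]) (hc0.trans hcq).le

theorem exists_quantile (hF : IsDistFun F) {q : ℝ} (hq0 : 0 < q) (hq1 : q < 1) :
    ∃ b, q ≤ F b ∧ ∀ s < b, F s < q := by
  set S := {t | q ≤ F t}
  have hne : S.Nonempty := (hF.2.2.2.eventually (lt_mem_nhds hq1)).exists.imp fun _ => le_of_lt
  have hbdd : BddBelow S := by
    obtain ⟨t₀, ht₀⟩ := hF.exists_lt hq0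
    exact ⟨t₀, fun t (ht : q ≤ F t) => le_of_lt (hF.mono.reflect_lt (ht₀.trans_le ht))⟩
  have hlt : ∀ s < sInf S, F s < q := fun s hs => lt_of_not_ge fun h => (csInf_le hbdd h).not_gt hs
  refine ⟨sInf S, ?_, hlt⟩
  refine ge_of_tendsto ((hF.2.1 _).mono_left (nhdsWithin_mono _ Set.Ioi_subset_Ici_self)) ?_
  filter_upwards [self_mem_nhdsWithin] with s hs
  obtain ⟨t, ht, hts⟩ := (csInf_lt_iff hbdd hne).1 hs
  exact ht.trans (hF.mono hts.le)

theorem tendsto_tail_nhdsGT_zero (hF : IsDistFun F) (h1 : Tendsto F (upperEndFilter F) (𝓝 1)) :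
    Tendsto (fun t => 1 - F t) (upperEndFilter F) (𝓝[>] 0) := by
  refine tendsto_nhdsWithin_iff.2 ⟨by simpa using h1.const_sub 1, ?_⟩
  filter_upwards [hF.eventually_lt_one] with t ht using sub_pos.2 ht

theorem exists_tendsto_tail_ratio (hF : IsDistFun F) {α : ℝ} {a b : ℕ → ℝ} (ha : ∀ n, 0 < a n)
    (h : ∀ x, 0 < 1 + α * x →
      Tendsto (fun n : ℕ => (n : ℝ) * (1 - F (a n * x + b n))) atTop (𝓝 (gEVT α x))) :
    ∃ A : ℝ → ℝ, (∀ t, F t < 1 → 0 < A t) ∧ ∀ x, 0 < 1 + α * x →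
      Tendsto (fun t => (1 - F (t + x * A t)) / (1 - F t)) (upperEndFilter F)
        (𝓝 (gEVT α x)) := by
  set N : ℝ → ℕ := fun t => ⌈(1 - F t)⁻¹⌉₊
  refine ⟨fun t => a (N t), fun t _ => ha _, fun x hx => ?_⟩
  have hD : ∀ {y}, 0 < 1 + α * y → {w | 0 < 1 + α * w} ∈ 𝓝 y :=
    fun hy => (isOpen_setOf_one_add_mul_pos α).mem_nhds hy
  have h0 : (0 : ℝ) < 1 + α * 0 := by simp
  have hinv : Tendsto (fun t => (1 - F t)⁻¹) (upperEndFilter F) atTop :=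
    tendsto_inv_nhdsGT_zero.comp <| hF.tendsto_tail_nhdsGT_zero <|
      hF.tendsto_one_of_tendsto_nat_mul_tail one_pos (by simpa [gEVT_zero] using h 0 h0)
  have hN : Tendsto N (upperEndFilter F) atTop := tendsto_nat_ceil_atTop.comp hinv
  have hNF : Tendsto (fun t => (N t : ℝ) * (1 - F t)) (upperEndFilter F) (𝓝 1) :=
    (tendsto_nat_ceil_div_atTop.comp hinv).congr fun t => by simp [N, div_inv_eq_mul]
  set φ : ℝ → ℝ → ℝ := fun t w => N t * (1 - F (a (N t) * w + b (N t)))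
  have hφ : ∀ᶠ t in upperEndFilter F, Antitone (φ t) := Eventually.of_forall fun t w w' hw =>
    mul_le_mul_of_nonneg_left (sub_le_sub_left (hF.mono (by gcongr; exact (ha _).le)) _)
      (Nat.cast_nonneg _)
  have hlim : ∀ {y}, 0 < 1 + α * y →
      ∀ᶠ w in 𝓝 y, Tendsto (fun t => φ t w) (upperEndFilter F) (𝓝 (gEVT α w)) :=
    fun hy => Filter.mem_of_superset (hD hy) fun w hw => (h w hw).comp hN
  set z : ℝ → ℝ := fun t => (t - b (N t)) / a (N t)
  have hz : Tendsto z (upperEndFilter F) (𝓝 0) := by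
    refine tendsto_of_tendsto_apply_of_antitone hφ (hlim h0) (hD h0) (strictAntiOn_gEVT α) ?_
    rw [gEVT_zero]
    refine hNF.congr fun t => ?_
    simp only [φ, z, mul_div_cancel₀ _ (ha _).ne', sub_add_cancel]
  have hnum : Tendsto (fun t => φ t (z t + x)) (upperEndFilter F) (𝓝 (gEVT α x)) :=
    tendsto_apply_of_antitone hφ (hlim hx) ((continuousOn_gEVT α).continuousAt (hD hx))
      (by simpa using hz.add_const x)
  have hratio := hnum.div hNF one_ne_zero
  rw [div_one] at hratio
  refine hratio.congr' ?_
  filter_upwards [hN.eventually_ne_atTop 0] with t ht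
  have hpt : a (N t) * (z t + x) + b (N t) = t + x * a (N t) := by
    simp only [z]; field_simp [(ha (N t)).ne']; ring
  change N t * (1 - F _) / (N t * (1 - F t)) = _
  rw [hpt, mul_div_mul_left _ _ (Nat.cast_ne_zero.2 ht : (N t : ℝ) ≠ 0)]

theorem exists_quantile_seq (hF : IsDistFun F) (h1 : Tendsto F (upperEndFilter F) (𝓝 1)) :
    ∃ b : ℕ → ℝ, (∀ n, F (b n) < 1) ∧
      (∀ n : ℕ, 2 ≤ n → 1 - (n : ℝ)⁻¹ ≤ F (b n) ∧ ∀ s < b n, F s < 1 - (n : ℝ)⁻¹) ∧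
      Tendsto b atTop (upperEndFilter F) := by
  have hquant : ∀ n : ℕ, ∃ c, F c < 1 ∧
      (2 ≤ n → 1 - (n : ℝ)⁻¹ ≤ F c ∧ ∀ s < c, F s < 1 - (n : ℝ)⁻¹) := by
    intro n
    by_cases hn : 2 ≤ n
    · have hn0 : (0 : ℝ) < (n : ℝ)⁻¹ := by positivity
      have hn1 : (n : ℝ)⁻¹ < 1 := inv_lt_one_of_one_lt₀ (by exact_mod_cast hn)
      obtain ⟨c, hc, hlt⟩ := hF.exists_quantile (q := 1 - (n : ℝ)⁻¹) (by linarith) (by linarith)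
      obtain ⟨t, hqt, ht1⟩ :=
        ((h1.eventually (lt_mem_nhds (by linarith : 1 - (n : ℝ)⁻¹ < 1))).and
          hF.eventually_lt_one).exists
      have hct : c ≤ t := le_of_not_gt fun htc => (hlt t htc).not_gt hqt
      exact ⟨c, (hF.mono hct).trans_lt ht1, fun _ => ⟨hc, hlt⟩⟩
    · obtain ⟨c, hc⟩ := hF.eventually_lt_one.exists
      exact ⟨c, hc, fun h2 => absurd h2 hn⟩
  choose b hb1 hbq using hquant
  refine ⟨b, hb1, hbq, hF.tendsto_upperEndFilter (Eventually.of_forall hb1) fun t ht => ?_⟩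
  have hq : Tendsto (fun n : ℕ => 1 - (n : ℝ)⁻¹) atTop (𝓝 1) := by
    simpa using tendsto_inv_atTop_nhds_zero_nat.const_sub (1 : ℝ)
  filter_upwards [hq.eventually (lt_mem_nhds ht), eventually_ge_atTop 2] with n hn h2
  exact lt_of_not_ge fun hbt => ((hbq n h2).1.trans (hF.mono hbt)).not_gt hn

theorem tendsto_nat_mul_tail_of_quantile_seq {b d : ℕ → ℝ}
    (hb1 : ∀ n, F (b n) < 1)
    (hbq : ∀ n : ℕ, 2 ≤ n → 1 - (n : ℝ)⁻¹ ≤ F (b n) ∧ ∀ s < b n, F s < 1 - (n : ℝ)⁻¹)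
    (hd : ∀ n, 0 < d n)
    (h : Tendsto (fun n => (1 - F (b n + -(n : ℝ)⁻¹ * d n)) / (1 - F (b n))) atTop (𝓝 1)) :
    Tendsto (fun n : ℕ => (n : ℝ) * (1 - F (b n))) atTop (𝓝 1) := by
  have htail : ∀ n, 0 < 1 - F (b n) := fun n => sub_pos.2 (hb1 n)
  -- `n (1 - F (b n)) ≤ 1 < n (1 - F s)` for `s < b n`
  have hinv : Tendsto (fun n : ℕ => ((n : ℝ) * (1 - F (b n)))⁻¹) atTop (𝓝 1) := by
    refine tendsto_of_tendsto_of_tendsto_of_le_of_le' tendsto_const_nhds h ?_ ?_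
    all_goals filter_upwards [eventually_ge_atTop 2] with n h2
    · have hq := (hbq n h2).1
      have hn : (n : ℝ) * (1 - F (b n)) ≤ 1 := by
        calc (n : ℝ) * (1 - F (b n)) ≤ n * (n : ℝ)⁻¹ := by gcongr; linarith
          _ = 1 := mul_inv_cancel₀ (by positivity)
      exact (one_le_inv₀ (mul_pos (by positivity) (htail n))).2 hn
    · have hs : F (b n + -(n : ℝ)⁻¹ * d n) < 1 - (n : ℝ)⁻¹ :=
        (hbq n h2).2 _ (by nlinarith [hd n, inv_pos.2 (show (0 : ℝ) < n by positivity)])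
      rw [mul_inv, ← div_eq_mul_inv]
      exact div_le_div_of_nonneg_right (by linarith) (htail n).le
  simpa using hinv.inv₀ one_ne_zero

theorem exists_tendsto_nat_mul_tail (hF : IsDistFun F) {α : ℝ} {A : ℝ → ℝ}
    (hA : ∀ t, F t < 1 → 0 < A t)
    (h : ∀ x, 0 < 1 + α * x → Tendsto (fun t => (1 - F (t + x * A t)) / (1 - F t))
      (upperEndFilter F) (𝓝 (gEVT α x))) :
    ∃ a b : ℕ → ℝ, (∀ n, 0 < a n) ∧ ∀ x, 0 < 1 + α * x →
      Tendsto (fun n : ℕ => (n : ℝ) * (1 - F (a n * x + b n))) atTop (𝓝 (gEVT α x)) := by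
  have h0 : (0 : ℝ) < 1 + α * 0 := by simp
  have h1 : Tendsto F (upperEndFilter F) (𝓝 1) := by
    obtain ⟨x₀, hx₀, hg⟩ := exists_gEVT_eq (α := α) one_half_pos
    exact hF.tendsto_one_of_tendsto_tail_ratio one_half_pos one_half_lt_one (hg ▸ h x₀ hx₀)
  obtain ⟨b, hb1, hbq, hbl⟩ := hF.exists_quantile_seq h1
  set a : ℕ → ℝ := fun n => A (b n)
  have ha : ∀ n, 0 < a n := fun n => hA _ (hb1 n)
  have htail : ∀ n, 0 < 1 - F (b n) := fun n => sub_pos.2 (hb1 n)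
  set r : ℕ → ℝ → ℝ := fun n w => (1 - F (b n + w * a n)) / (1 - F (b n))
  have hr : ∀ᶠ n in atTop, Antitone (r n) := Eventually.of_forall fun n w w' hw =>
    div_le_div_of_nonneg_right (sub_le_sub_left (hF.mono (by gcongr; exact (ha n).le)) _)
      (htail n).le
  have hlim : ∀ᶠ w in 𝓝 0, Tendsto (fun n => r n w) atTop (𝓝 (gEVT α w)) :=
    Filter.mem_of_superset ((isOpen_setOf_one_add_mul_pos α).mem_nhds h0)
      fun w hw => (h w hw).comp hbl
  have hr0 : Tendsto (fun n : ℕ => r n (-(n : ℝ)⁻¹)) atTop (𝓝 1) := by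
    have := tendsto_apply_of_antitone hr hlim
      ((continuousOn_gEVT α).continuousAt ((isOpen_setOf_one_add_mul_pos α).mem_nhds h0))
      (by simpa using tendsto_inv_atTop_nhds_zero_nat.neg (G := ℝ))
    rwa [gEVT_zero] at this
  have hnb := tendsto_nat_mul_tail_of_quantile_seq hb1 hbq ha hr0
  refine ⟨a, b, ha, fun x hx => ?_⟩
  have hprod := ((h x hx).comp hbl).mul hnb
  rw [mul_one] at hprod
  refine hprod.congr fun n => ?_
  simp only [Function.comp, a]
  rw [add_comm, mul_comm x]
  field_simp [(htail n).ne']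

theorem tendsto_pow_GEV_of_one_add_mul_nonpos (hF : IsDistFun F) {α : ℝ} {a b : ℕ → ℝ}
    (ha : ∀ n, 0 < a n) (h : ∀ y, 0 < 1 + α * y →
      Tendsto (fun n => F (a n * y + b n) ^ n) atTop (𝓝 (GEV α y)))
    {x : ℝ} (hx : 1 + α * x ≤ 0) :
    Tendsto (fun n => F (a n * x + b n) ^ n) atTop (𝓝 (GEV α x)) := by
  have hmono : ∀ n, Monotone fun y => F (a n * y + b n) ^ n := fun n y y' hy =>
    pow_le_pow_left₀ (hF.nonneg _) (hF.mono (by gcongr; exact (ha n).le)) n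
  rcases lt_trichotomy α 0 with hα | rfl | hα
  · rw [GEV, if_neg hx.not_gt, if_neg hα.not_gt]
    refine tendsto_order.2 ⟨fun u hu => ?_, fun u hu => Eventually.of_forall fun n =>
      (pow_le_one₀ (hF.nonneg _) (hF.le_one _)).trans_lt hu⟩
    obtain ⟨p, hup, hp1⟩ := exists_between (max_lt hu one_pos)
    obtain ⟨y, hy, hGy⟩ := exists_GEV_eq ((le_max_right u 0).trans_lt hup) hp1
    filter_upwards [(h y hy).eventually (lt_mem_nhds (hGy ▸ (le_max_left u 0).trans_lt hup))]
      with n hn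
    exact hn.trans_le (hmono n (by nlinarith))
  · norm_num at hx
  · rw [GEV, if_neg hx.not_gt, if_pos hα]
    refine tendsto_order.2 ⟨fun u hu => Eventually.of_forall fun n =>
      hu.trans_le (pow_nonneg (hF.nonneg _) _), fun u hu => ?_⟩
    obtain ⟨p, hp0, hpu⟩ := exists_between (lt_min hu one_pos)
    obtain ⟨y, hy, hGy⟩ := exists_GEV_eq hp0 (hpu.trans_le (min_le_right u 1))
    filter_upwards [(h y hy).eventually (gt_mem_nhds (hGy ▸ hpu.trans_le (min_le_left u 1)))]
      with n hn
    exact (hmono n (by nlinarith)).trans_lt hn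

theorem memDomAttr_GEV_iff (hF : IsDistFun F) {α : ℝ} :
    MemDomAttr F (GEV α) ↔ ∃ a b : ℕ → ℝ, (∀ n, 0 < a n) ∧ ∀ x, 0 < 1 + α * x →
      Tendsto (fun n : ℕ => (n : ℝ) * (1 - F (a n * x + b n))) atTop (𝓝 (gEVT α x)) := by
  refine ⟨fun ⟨a, b, ha, h⟩ => ⟨a, b, ha, fun x hx => ?_⟩, fun ⟨a, b, ha, h⟩ => ?_⟩
  · refine tendsto_nat_mul_one_sub_of_tendsto_pow (fun n => hF.nonneg _) ?_
    simpa only [GEV_of_pos hx] using h x (continuousAt_GEV hx)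
  · have hdom : ∀ y, 0 < 1 + α * y →
        Tendsto (fun n => F (a n * y + b n) ^ n) atTop (𝓝 (GEV α y)) := fun y hy => by
      rw [GEV_of_pos hy]
      refine (Real.tendsto_one_add_pow_exp_of_tendsto (g := fun n => F (a n * y + b n) - 1)
        ((h y hy).neg.congr fun n => by ring)).congr fun n => by rw [add_sub_cancel]
    refine ⟨a, b, ha, fun x _ => ?_⟩
    rcases lt_or_ge 0 (1 + α * x) with hx | hx
    · exact hdom x hx
    · exact hF.tendsto_pow_GEV_of_one_add_mul_nonpos ha hdom hx

end IsDistFun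

/-- **Unified domain-of-attraction / Pickands–Balkema–de Haan theorem.**
`F ∈ D(G_α)` iff for some function `a` positive on `(-∞, x₊)` the tail ratios
`F̄(t + x a(t))/F̄(t)` converge to `g_α(x)` as `t ↑ x₊`, for every `x` with
`1 + αx > 0` (every `x` when `α = 0`); equivalently, the conditional law of the
scaled excess `(X - u)/a(u)` given `X > u` converges to the generalised Pareto
distribution `H_α = 1 - g_α` as `u ↑ x₊`. -/
theorem unified_domain_of_attraction_POT (F : ℝ → ℝ) (hF : IsDistFun F) (α : ℝ) :
    (MemDomAttr F (GEV α) ↔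
      ∃ a : ℝ → ℝ, (∀ t, F t < 1 → 0 < a t) ∧
        ∀ x : ℝ, 0 < 1 + α * x →
          Tendsto (fun t => (1 - F (t + x * a t)) / (1 - F t))
            (upperEndFilter F) (𝓝 (gEVT α x))) ∧
    (MemDomAttr F (GEV α) ↔
      ∃ a : ℝ → ℝ, (∀ t, F t < 1 → 0 < a t) ∧
        ∀ x : ℝ, 0 < 1 + α * x →
          Tendsto (fun t => 1 - (1 - F (t + x * a t)) / (1 - F t))
            (upperEndFilter F) (𝓝 (1 - gEVT α x))) := by
  have hratio := (hF.memDomAttr_GEV_iff (α := α)).trans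
    ⟨fun ⟨_, _, ha, h⟩ => hF.exists_tendsto_tail_ratio ha h,
      fun ⟨_, hA, h⟩ => hF.exists_tendsto_nat_mul_tail hA h⟩
  refine ⟨hratio, hratio.trans ?_⟩
  exact exists_congr fun a => and_congr_right fun _ => forall₂_congr fun x _ =>
    (tendsto_const_sub_iff 1).symm
end

section
/- Threshold stability characterises the generalised Pareto distributions: Let W : [0,∞) → (0,1] be continuous and strictly decreasing with W(0) = 1 and W(x) → 0 as x → ∞. Suppose that for every u ≥ 0 there exists σ(u) > 0 such that W(u + σ(u)·x)/W(u) = W(x) for all x ≥ 0. Then there exist σ > 0 and α ≥ 0 such that either W(x) = e^{−x/σ} for all x ≥ 0 (case α = 0), or W(x) = (1 + αx/σ)^{−1/α} for all x ≥ 0. -/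
open Filter Topology

/-!
Exceeding the thresholds `u` and `1` in either order gives the same survival probability, so
injectivity of `W` forces the scale to be affine, `σ(u) = 1 + αu`, and `σ > 0` forces `α ≥ 0`.
On the scale `x = (e^s - 1)/α` (just `x = s` when `α = 0`) the map `x ↦ u + σ(u)x` becomes
translation, so `W` turns into a continuous, strictly decreasing solution of
`φ(s + t) = φ(s)φ(t)`, i.e. `e^{-cs}` by Cauchy's functional equation. Undoing the change of
scale gives `(1 + αx)^{-c}`.
-/

open Set Real NNReal

theorem eq_mul_of_map_add_of_continuousOn {L : ℝ → ℝ} (hc : ContinuousOn L (Ici 0))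
    (hadd : ∀ s ≥ (0:ℝ), ∀ t ≥ (0:ℝ), L (s + t) = L s + L t) (s : ℝ) (hs : 0 ≤ s) :
    L s = s * L 1 := by
  let f : ℝ≥0 →+ ℝ := .mk' (fun s => L s) fun s t => hadd s s.2 t t.2
  have hrat (q : ℚ≥0) : L q = q * L 1 := by
    have := map_nnratCast_smul f ℝ≥0 ℝ q 1
    rwa [smul_eq_mul, mul_one, smul_eq_mul] at this
  -- `L ∘ |·|` and `|·| * L 1` are continuous on all of `ℝ` and agree on `ℚ`.
  have habs : (fun c : ℝ => L |c|) = fun c => |c| * L 1 :=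
    Rat.isDenseEmbedding_coe_real.dense.equalizer
      (hc.comp_continuous continuous_abs fun c => abs_nonneg c) (by fun_prop)
      (funext fun q => by
        have := hrat q.nnabs
        rwa [← Rat.cast_nnratCast, Rat.coe_nnabs, Rat.cast_abs] at this)
  simpa [abs_of_nonneg hs] using congr_fun habs s

theorem exists_eq_exp_neg_mul_of_map_add_eq_mul {φ : ℝ → ℝ} (hc : ContinuousOn φ (Ici 0))
    (hpos : ∀ s ≥ (0:ℝ), 0 < φ s) (hmul : ∀ s ≥ (0:ℝ), ∀ t ≥ (0:ℝ), φ (s + t) = φ s * φ t)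
    (h10 : φ 1 < φ 0) : ∃ c : ℝ, 0 < c ∧ ∀ s ≥ (0:ℝ), φ s = exp (-(c * s)) := by
  have hlin : ∀ s ≥ (0:ℝ), log (φ s) = s * log (φ 1) :=
    eq_mul_of_map_add_of_continuousOn (hc.log fun s hs => (hpos s hs).ne') fun s hs t ht => by
      rw [hmul s hs t ht, log_mul (hpos s hs).ne' (hpos t ht).ne']
  have hφ0 : φ 0 = 1 := by simpa [exp_log (hpos 0 le_rfl)] using congr_arg exp (hlin 0 le_rfl)
  refine ⟨-log (φ 1), neg_pos.2 (log_neg (hpos 1 zero_le_one) (hφ0 ▸ h10)), fun s hs => ?_⟩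
  rw [neg_mul, neg_neg, mul_comm, ← hlin s hs, exp_log (hpos s hs)]

theorem scale_eq_one_add_mul {W σ : ℝ → ℝ} (hinj : InjOn W (Ici 0))
    (hσ : ∀ u ≥ (0:ℝ), 0 ≤ σ u) (hmul : ∀ u ≥ (0:ℝ), ∀ x ≥ (0:ℝ), W (u + σ u * x) = W u * W x)
    (u : ℝ) (hu : 0 ≤ u) : σ u = 1 + (σ 1 - 1) * u := by
  have hmem : ∀ u ≥ (0:ℝ), ∀ x ≥ (0:ℝ), u + σ u * x ∈ Ici 0 := fun u hu x hx =>
    add_nonneg hu (mul_nonneg (hσ u hu) hx)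
  -- Exceeding `u` and then `1` is exceeding `1` and then `u`.
  have hcomm : u + σ u * 1 = 1 + σ 1 * u :=
    hinj (hmem u hu 1 zero_le_one) (hmem 1 zero_le_one u hu) <| by
      rw [hmul u hu 1 zero_le_one, hmul 1 zero_le_one u hu, mul_comm]
  linarith

theorem nonneg_of_forall_one_add_mul_pos {α : ℝ} (h : ∀ u ≥ (0:ℝ), 0 < 1 + α * u) : 0 ≤ α := by
  by_contra! hα
  have := h (-α⁻¹) (neg_nonneg.2 (inv_nonpos.2 hα.le))
  rw [mul_neg, mul_inv_cancel₀ hα.ne] at this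
  norm_num at this

theorem exists_eq_one_add_mul_rpow_neg {W : ℝ → ℝ} {α : ℝ} (hα : 0 < α)
    (hcont : ContinuousOn W (Ici 0)) (hanti : StrictAntiOn W (Ici 0))
    (hpos : ∀ x ≥ (0:ℝ), 0 < W x)
    (hmul : ∀ u ≥ (0:ℝ), ∀ x ≥ (0:ℝ), W (u + (1 + α * u) * x) = W u * W x) :
    ∃ c : ℝ, 0 < c ∧ ∀ x ≥ (0:ℝ), W x = (1 + α * x) ^ (-c) := by
  set τ : ℝ → ℝ := fun s => (exp s - 1) / α with hτ
  have hτ_nonneg : ∀ s ≥ (0:ℝ), 0 ≤ τ s := fun s hs =>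
    div_nonneg (sub_nonneg.2 (one_le_exp hs)) hα.le
  have hτ_add (s t : ℝ) : τ (s + t) = τ s + (1 + α * τ s) * τ t := by
    simp only [hτ, exp_add]; field_simp; ring
  have hτ_01 : τ 0 < τ 1 := by
    simpa [hτ] using div_pos (sub_pos.2 (one_lt_exp_iff.2 one_pos)) hα
  obtain ⟨c, hc, hφ⟩ := exists_eq_exp_neg_mul_of_map_add_eq_mul (φ := W ∘ τ)
    (hcont.comp (by fun_prop) hτ_nonneg) (fun s hs => hpos _ (hτ_nonneg s hs))
    (fun s hs t ht => by
      simp only [Function.comp, hτ_add, hmul _ (hτ_nonneg s hs) _ (hτ_nonneg t ht)])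
    (hanti (hτ_nonneg 0 le_rfl) (hτ_nonneg 1 zero_le_one) hτ_01)
  refine ⟨c, hc, fun x hx => ?_⟩
  have hx' : 1 ≤ 1 + α * x := le_add_of_nonneg_right (mul_nonneg hα.le hx)
  have hτx : τ (log (1 + α * x)) = x := by
    simp only [hτ, exp_log (by linarith : 0 < 1 + α * x)]; field_simp; ring
  calc W x = W (τ (log (1 + α * x))) := by rw [hτx]
    _ = exp (-(c * log (1 + α * x))) := hφ _ (log_nonneg hx')
    _ = (1 + α * x) ^ (-c) := by rw [rpow_def_of_pos (by linarith), mul_neg, mul_comm]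

theorem threshold_stability_characterises_GPD_general (W : ℝ → ℝ)
    (hcont : ContinuousOn W (Set.Ici 0))
    (hanti : StrictAntiOn W (Set.Ici 0))
    (hrange : ∀ x ≥ (0:ℝ), 0 < W x ∧ W x ≤ 1)
    (σfun : ℝ → ℝ) (hσpos : ∀ u ≥ (0:ℝ), 0 < σfun u)
    (hstable : ∀ u ≥ (0:ℝ), ∀ x ≥ (0:ℝ), W (u + σfun u * x) / W u = W x) :
    ∃ σ : ℝ, 0 < σ ∧ ∃ α : ℝ, 0 ≤ α ∧
      ((α = 0 ∧ ∀ x ≥ (0:ℝ), W x = Real.exp (-x / σ)) ∨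
        (0 < α ∧ ∀ x ≥ (0:ℝ), W x = (1 + α * x / σ) ^ (-1 / α))) := by
  have hpos : ∀ x ≥ (0:ℝ), 0 < W x := fun x hx => (hrange x hx).1
  have hmul : ∀ u ≥ (0:ℝ), ∀ x ≥ (0:ℝ), W (u + σfun u * x) = W u * W x := fun u hu x hx => by
    rw [← hstable u hu x hx, mul_div_cancel₀ _ (hpos u hu).ne']
  have hσ := scale_eq_one_add_mul hanti.injOn (fun u hu => (hσpos u hu).le) hmul
  set α := σfun 1 - 1
  have hα : 0 ≤ α := nonneg_of_forall_one_add_mul_pos fun u hu => hσ u hu ▸ hσpos u hu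
  have hmulα : ∀ u ≥ (0:ℝ), ∀ x ≥ (0:ℝ), W (u + (1 + α * u) * x) = W u * W x :=
    fun u hu x hx => hσ u hu ▸ hmul u hu x hx
  rcases hα.eq_or_lt with hα0 | hα0
  · obtain ⟨c, hc, hW⟩ := exists_eq_exp_neg_mul_of_map_add_eq_mul hcont hpos
      (fun u hu x hx => by simpa [← hα0] using hmulα u hu x hx)
      (hanti self_mem_Ici (mem_Ici.2 zero_le_one) one_pos)
    refine ⟨c⁻¹, inv_pos.2 hc, 0, le_rfl, .inl ⟨rfl, fun x hx => ?_⟩⟩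
    rw [hW x hx, div_inv_eq_mul, neg_mul, mul_comm]
  · obtain ⟨c, hc, hW⟩ := exists_eq_one_add_mul_rpow_neg hα0 hcont hanti hpos hmulα
    refine ⟨(c * α)⁻¹, by positivity, c⁻¹, by positivity, .inr ⟨by positivity, fun x hx => ?_⟩⟩
    rw [hW x hx]
    congr 1 <;> field_simp

/-- **Threshold stability characterises the generalised Pareto laws.**
Let `W : [0,∞) → (0,1]` be a continuous, strictly decreasing survival function
with `W(0) = 1` and `W(x) → 0` as `x → ∞`.  If for every threshold `u ≥ 0`
there is a scaling `σ(u) > 0` with `W(u + σ(u) x)/W(u) = W(x)` for all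
`x ≥ 0`, then `W` is a generalised Pareto survival function: there are `σ > 0`
and `α ≥ 0` with either `W(x) = e^{-x/σ}` (case `α = 0`) or
`W(x) = (1 + αx/σ)^{-1/α}` (case `α > 0`) for all `x ≥ 0`. -/
theorem threshold_stability_characterises_GPD (W : ℝ → ℝ)
    (hcont : ContinuousOn W (Set.Ici 0))
    (hanti : StrictAntiOn W (Set.Ici 0))
    (hrange : ∀ x ≥ (0:ℝ), 0 < W x ∧ W x ≤ 1)
    (hW0 : W 0 = 1)
    (hlim : Tendsto W atTop (𝓝 0))
    (σfun : ℝ → ℝ) (hσpos : ∀ u ≥ (0:ℝ), 0 < σfun u)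
    (hstable : ∀ u ≥ (0:ℝ), ∀ x ≥ (0:ℝ), W (u + σfun u * x) / W u = W x) :
    ∃ σ : ℝ, 0 < σ ∧ ∃ α : ℝ, 0 ≤ α ∧
      ((α = 0 ∧ ∀ x ≥ (0:ℝ), W x = Real.exp (-x / σ)) ∨
        (0 < α ∧ ∀ x ≥ (0:ℝ), W x = (1 + α * x / σ) ^ (-1 / α))) :=
  threshold_stability_characterises_GPD_general W hcont hanti hrange σfun hσpos hstable
end

section
/- Von Mises functions have tails decreasing faster than any power: Let c > 0, d ∈ ℝ, let a : [d,∞) → (0,∞) be differentiable with a′(t) → 0 as t → ∞, and set F̄(x) := c·exp(−∫_d^x dt/a(t)) for x ≥ d. Then for every n ∈ ℕ, xⁿ·F̄(x) → 0 as x → ∞. -/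
open Filter Topology

/-! Since `a' → 0`, the mean value theorem gives `a t ≤ t / (n + 1)` for large `t`, so
`∫_d^x 1/a ≥ (n + 1) log x - O(1)` and `F̄(x) = O(x^{-(n+1)})`. -/

open Real Set Asymptotics MeasureTheory

theorem eventually_le_mul_of_tendsto_deriv_zero {a a' : ℝ → ℝ}
    (hderiv : ∀ᶠ t in atTop, HasDerivAt a (a' t) t) (hlim : Tendsto a' atTop (𝓝 0))
    {ε : ℝ} (hε : 0 < ε) : ∀ᶠ t in atTop, a t ≤ ε * t := by
  obtain ⟨t₁, ht₁⟩ :=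
    (hderiv.and (hlim.eventually (gt_mem_nhds (half_pos hε)))).exists_forall_of_atTop
  have hgrowth : ∀ t ≥ t₁, a t - a t₁ ≤ ε / 2 * (t - t₁) := fun t ht =>
    (convex_Ici t₁).image_sub_le_mul_sub_of_deriv_le
      (fun s hs => (ht₁ s hs).1.continuousAt.continuousWithinAt)
      (fun s hs => (ht₁ s (interior_subset hs)).1.differentiableAt.differentiableWithinAt)
      (fun s hs => (ht₁ s (interior_subset hs)).1.deriv ▸ (ht₁ s (interior_subset hs)).2.le)
      t₁ self_mem_Ici t ht ht
  filter_upwards [eventually_ge_atTop t₁, eventually_ge_atTop (2 * a t₁ / ε - t₁)]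
    with t ht ht'
  have hcancel : ε / 2 * (2 * a t₁ / ε - t₁) = a t₁ - ε / 2 * t₁ := by field_simp
  linarith [hgrowth t ht, mul_le_mul_of_nonneg_left ht' (half_pos hε).le]

theorem inv_mul_log_div_le_integral_one_div {a : ℝ → ℝ} {ε t₀ x : ℝ} (ht₀ : 0 < t₀)
    (hx : t₀ ≤ x) (hcont : ContinuousOn a (Icc t₀ x))
    (hpos : ∀ t ∈ Icc t₀ x, 0 < a t) (hle : ∀ t ∈ Icc t₀ x, a t ≤ ε * t) :
    ε⁻¹ * log (x / t₀) ≤ ∫ t in t₀..x, 1 / a t := by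
  have hinv : ∫ t in t₀..x, ε⁻¹ * t⁻¹ = ε⁻¹ * log (x / t₀) := by
    rw [intervalIntegral.integral_const_mul, integral_inv_of_pos ht₀ (ht₀.trans_le hx)]
  rw [← hinv]
  refine intervalIntegral.integral_mono_on hx ?_ ?_ fun t ht => ?_
  · refine (continuousOn_const.mul (continuousOn_inv₀.mono ?_)).intervalIntegrable
    intro t ht
    rw [uIcc_of_le hx] at ht
    exact (ht₀.trans_le ht.1).ne'
  · exact (continuousOn_const.div hcont fun t ht => (hpos t ht).ne').intervalIntegrable_of_Icc hx
  · rw [← mul_inv, one_div]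
    exact inv_anti₀ (hpos t ht) (hle t ht)

theorem exp_neg_integral_one_div_isBigO {a : ℝ → ℝ} {d ε : ℝ}
    (hcont : ∀ t ≥ d, ContinuousAt a t) (hpos : ∀ t ≥ d, 0 < a t)
    (hle : ∀ᶠ t in atTop, a t ≤ ε * t) :
    (fun x => exp (-∫ t in d..x, 1 / a t)) =O[atTop] fun x => x ^ (-ε⁻¹) := by
  obtain ⟨t₀, ht₀⟩ :=
    ((hle.and (eventually_ge_atTop d)).and (eventually_gt_atTop 0)).exists_forall_of_atTop
  obtain ⟨⟨-, hdt₀⟩, ht₀pos⟩ := ht₀ t₀ le_rfl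
  have hint : ∀ y ≥ d, ∀ z ≥ d, IntervalIntegrable (fun t => 1 / a t) volume y z :=
    fun y hy z hz => ContinuousOn.intervalIntegrable fun t ht =>
      have hdt : d ≤ t := (le_min hy hz).trans ht.1
      (continuousAt_const.div (hcont t hdt) (hpos t hdt).ne').continuousWithinAt
  set C := ∫ t in d..t₀, 1 / a t
  refine IsBigO.of_bound (exp (-C) * t₀ ^ ε⁻¹) ?_
  filter_upwards [eventually_ge_atTop t₀] with x hx
  have hx₀ : 0 < x := ht₀pos.trans_le hx
  have hlower : C + ε⁻¹ * log (x / t₀) ≤ ∫ t in d..x, 1 / a t := by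
    rw [← intervalIntegral.integral_add_adjacent_intervals (hint d le_rfl t₀ hdt₀)
      (hint t₀ hdt₀ x (hdt₀.trans hx))]
    gcongr
    exact inv_mul_log_div_le_integral_one_div ht₀pos hx
      (fun t ht => (hcont t (ht₀ t ht.1).1.2).continuousWithinAt)
      (fun t ht => hpos t (ht₀ t ht.1).1.2) (fun t ht => (ht₀ t ht.1).1.1)
  rw [norm_of_nonneg (exp_pos _).le, norm_of_nonneg (rpow_nonneg hx₀.le _)]
  calc exp (-∫ t in d..x, 1 / a t) ≤ exp (-C) * exp (log (x / t₀) * -ε⁻¹) := by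
        rw [← exp_add]; gcongr; linarith
    _ = exp (-C) * t₀ ^ ε⁻¹ * x ^ (-ε⁻¹) := by
        rw [← rpow_def_of_pos (div_pos hx₀ ht₀pos), div_rpow hx₀.le ht₀pos.le,
          rpow_neg ht₀pos.le]
        field_simp

theorem vonMises_tail_rapidly_decreasing_general (c d : ℝ)
    (a a' : ℝ → ℝ) (hpos : ∀ t ≥ d, 0 < a t)
    (hderiv : ∀ t ≥ d, HasDerivAt a (a' t) t)
    (hlim : Tendsto a' atTop (𝓝 0)) :
    ∀ n : ℕ,
      Tendsto (fun x => x ^ n * (c * Real.exp (-∫ t in d..x, 1 / a t)))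
        atTop (𝓝 0) := by
  intro n
  have hε : (0 : ℝ) < ((n : ℝ) + 1)⁻¹ := by positivity
  have hle := eventually_le_mul_of_tendsto_deriv_zero (eventually_atTop.2 ⟨d, hderiv⟩) hlim hε
  have htail := exp_neg_integral_one_div_isBigO (fun t ht => (hderiv t ht).continuousAt) hpos hle
  have hO := (isBigO_refl (fun x : ℝ => x ^ n) atTop).mul (htail.const_mul_left c)
  refine hO.trans_tendsto ((tendsto_rpow_neg_atTop one_pos).congr' ?_)
  filter_upwards [eventually_gt_atTop 0] with x hx
  rw [inv_inv, ← rpow_natCast, ← rpow_add hx]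
  ring_nf

/-- **Von Mises functions have tails decreasing faster than any power.**
Let `F̄(x) = c · exp(-∫_d^x dt/a(t))` be the tail of a von Mises function,
where `a > 0` on `[d, ∞)` is differentiable with `a'(t) → 0` as `t → ∞`.
Then `xⁿ F̄(x) → 0` as `x → ∞` for every `n ∈ ℕ`. -/
theorem vonMises_tail_rapidly_decreasing (c d : ℝ) (hc : 0 < c)
    (a a' : ℝ → ℝ) (hpos : ∀ t ≥ d, 0 < a t)
    (hderiv : ∀ t ≥ d, HasDerivAt a (a' t) t)
    (hlim : Tendsto a' atTop (𝓝 0)) :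
    ∀ n : ℕ,
      Tendsto (fun x => x ^ n * (c * Real.exp (-∫ t in d..x, 1 / a t)))
        atTop (𝓝 0) :=
  vonMises_tail_rapidly_decreasing_general c d a a' hpos hderiv hlim
end

section
/- Convex generators yield bivariate Archimedean copulas: Let ψ : [0,∞) → ℝ be continuous, convex and strictly decreasing with ψ(0) = 1 and ψ(t) → 0 as t → ∞, so that ψ is a bijection from [0,∞) onto (0,1] with inverse ψ^{-1}. Define C(u,v) := ψ(ψ^{-1}(u) + ψ^{-1}(v)) for u, v ∈ (0,1] and C(u,v) := 0 if u = 0 or v = 0. Then C has uniform margins, C(u,1) = u and C(1,v) = v for all u, v ∈ [0,1], and C is 2-increasing: for all 0 ≤ u₁ ≤ u₂ ≤ 1 and 0 ≤ v₁ ≤ v₂ ≤ 1, C(u₂,v₂) − C(u₁,v₂) − C(u₂,v₁) + C(u₁,v₁) ≥ 0; hence C is a copula. -/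
/-!
Write `a = ψinv u₁ ≥ b = ψinv u₂` and `c = ψinv v₁ ≥ d = ψinv v₂`. On `(0,1]²` the `C`-volume of
the rectangle is `ψ(b+d) - ψ(a+d) - ψ(b+c) + ψ(a+c)`, which is nonnegative because the increments
`ψ(t + (a-b)) - ψ(t)` of the convex `ψ` grow with `t`. A rectangle with a side on an axis has, by
groundedness and the symmetry of `C`, volume `C(u,v₂) - C(u,v₁)`, nonnegative because `ψ` and `ψinv`
are both decreasing.
-/

open Filter Topology Set

theorem ConvexOn.map_add_sub_le_map_add_sub {𝕜 β : Type*} [Field 𝕜] [LinearOrder 𝕜]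
    [IsStrictOrderedRing 𝕜] [AddCommGroup β] [PartialOrder β] [IsOrderedAddMonoid β]
    [Module 𝕜 β] [PosSMulMono 𝕜 β] {s : Set 𝕜} {f : 𝕜 → β} (hf : ConvexOn 𝕜 s f)
    {x y h : 𝕜} (hx : x ∈ s) (hyh : y + h ∈ s) (hxy : x ≤ y) (hh : 0 ≤ h) :
    f (x + h) - f x ≤ f (y + h) - f y := by
  rcases (add_nonneg (sub_nonneg.2 hxy) hh).eq_or_lt with hδ | hδ
  · obtain rfl : y = x := by linarith
    obtain rfl : h = 0 := by linarith
    rfl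
  -- `x + h` and `y` are the two convex combinations of `x` and `y + h` with swapped weights.
  set θ := h / (y - x + h)
  have hθ₀ : 0 ≤ θ := div_nonneg hh hδ.le
  have hθ₁ : θ ≤ 1 := div_le_one_of_le₀ (by linarith) hδ.le
  have hθh : θ * (y - x + h) = h := div_mul_cancel₀ h hδ.ne'
  have hleft := hf.2 hx hyh (sub_nonneg.2 hθ₁) hθ₀ (sub_add_cancel 1 θ)
  have hright := hf.2 hx hyh hθ₀ (sub_nonneg.2 hθ₁) (add_sub_cancel θ 1)
  rw [show (1 - θ) • x + θ • (y + h) = x + h by simp only [smul_eq_mul]; linear_combination hθh]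
    at hleft
  rw [show θ • x + (1 - θ) • (y + h) = y by simp only [smul_eq_mul]; linear_combination -hθh]
    at hright
  have hsum : ((1 - θ) • f x + θ • f (y + h)) + (θ • f x + (1 - θ) • f (y + h))
      = f x + f (y + h) := by
    simp only [sub_smul, one_smul]; abel
  rw [sub_le_sub_iff]
  calc f (x + h) + f y ≤ _ := add_le_add hleft hright
    _ = _ := hsum
    _ = f (y + h) + f x := add_comm _ _

theorem Set.eq_left_or_mem_Ioc_of_mem_Icc {α : Type*} [PartialOrder α] {a b x : α}
    (hx : x ∈ Icc a b) : x = a ∨ x ∈ Ioc a b := by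
  rcases hx.1.eq_or_lt with rfl | hax
  · exact .inl rfl
  · exact .inr ⟨hax, hx.2⟩

section ArchimedeanCopula

variable {ψ ψinv : ℝ → ℝ} {C : ℝ → ℝ → ℝ}

theorem antitoneOn_inv_of_strictAntiOn (hanti : StrictAntiOn ψ (Ici 0))
    (hinv_right : ∀ u ∈ Ioc (0 : ℝ) 1, 0 ≤ ψinv u ∧ ψ (ψinv u) = u) :
    AntitoneOn ψinv (Ioc 0 1) := by
  intro u hu v hv huv
  obtain ⟨hu₀, hψu⟩ := hinv_right u hu
  obtain ⟨hv₀, hψv⟩ := hinv_right v hv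
  rwa [← hanti.le_iff_ge hu₀ hv₀, hψu, hψv]

theorem archimedean_nonneg (hnonneg : ∀ t ≥ (0 : ℝ), 0 ≤ ψ t)
    (hinv_right : ∀ u ∈ Ioc (0 : ℝ) 1, 0 ≤ ψinv u ∧ ψ (ψinv u) = u)
    (hCdef : ∀ u ∈ Ioc (0 : ℝ) 1, ∀ v ∈ Ioc (0 : ℝ) 1, C u v = ψ (ψinv u + ψinv v))
    (hCzero : ∀ u v : ℝ, u = 0 ∨ v = 0 → C u v = 0)
    {u v : ℝ} (hu : u ∈ Icc (0 : ℝ) 1) (hv : v ∈ Icc (0 : ℝ) 1) : 0 ≤ C u v := by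
  rcases eq_left_or_mem_Ioc_of_mem_Icc hu with rfl | hu
  · exact (hCzero 0 v (.inl rfl)).ge
  rcases eq_left_or_mem_Ioc_of_mem_Icc hv with rfl | hv
  · exact (hCzero u 0 (.inr rfl)).ge
  rw [hCdef u hu v hv]
  exact hnonneg _ (add_nonneg (hinv_right u hu).1 (hinv_right v hv).1)

theorem archimedean_symm
    (hCdef : ∀ u ∈ Ioc (0 : ℝ) 1, ∀ v ∈ Ioc (0 : ℝ) 1, C u v = ψ (ψinv u + ψinv v))
    (hCzero : ∀ u v : ℝ, u = 0 ∨ v = 0 → C u v = 0)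
    {u v : ℝ} (hu : u ∈ Icc (0 : ℝ) 1) (hv : v ∈ Icc (0 : ℝ) 1) : C u v = C v u := by
  rcases eq_left_or_mem_Ioc_of_mem_Icc hu with rfl | hu
  · rw [hCzero 0 v (.inl rfl), hCzero v 0 (.inr rfl)]
  rcases eq_left_or_mem_Ioc_of_mem_Icc hv with rfl | hv
  · rw [hCzero u 0 (.inr rfl), hCzero 0 u (.inl rfl)]
  rw [hCdef u hu v hv, hCdef v hv u hu, add_comm]

theorem archimedean_one_right (hinv_one : ψinv 1 = 0)
    (hinv_right : ∀ u ∈ Ioc (0 : ℝ) 1, 0 ≤ ψinv u ∧ ψ (ψinv u) = u)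
    (hCdef : ∀ u ∈ Ioc (0 : ℝ) 1, ∀ v ∈ Ioc (0 : ℝ) 1, C u v = ψ (ψinv u + ψinv v))
    (hCzero : ∀ u v : ℝ, u = 0 ∨ v = 0 → C u v = 0)
    {u : ℝ} (hu : u ∈ Icc (0 : ℝ) 1) : C u 1 = u := by
  rcases eq_left_or_mem_Ioc_of_mem_Icc hu with rfl | hu
  · exact hCzero 0 1 (.inl rfl)
  rw [hCdef u hu 1 (right_mem_Ioc.2 zero_lt_one), hinv_one, add_zero, (hinv_right u hu).2]

theorem archimedean_monotoneOn_right (hnonneg : ∀ t ≥ (0 : ℝ), 0 ≤ ψ t)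
    (hanti : StrictAntiOn ψ (Ici 0))
    (hinv_right : ∀ u ∈ Ioc (0 : ℝ) 1, 0 ≤ ψinv u ∧ ψ (ψinv u) = u)
    (hCdef : ∀ u ∈ Ioc (0 : ℝ) 1, ∀ v ∈ Ioc (0 : ℝ) 1, C u v = ψ (ψinv u + ψinv v))
    (hCzero : ∀ u v : ℝ, u = 0 ∨ v = 0 → C u v = 0)
    {u : ℝ} (hu : u ∈ Icc (0 : ℝ) 1) : MonotoneOn (C u) (Icc 0 1) := by
  intro v₁ hv₁ v₂ hv₂ hv
  rcases eq_left_or_mem_Ioc_of_mem_Icc hv₁ with rfl | hv₁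
  · rw [hCzero u 0 (.inr rfl)]
    exact archimedean_nonneg hnonneg hinv_right hCdef hCzero hu hv₂
  rcases eq_left_or_mem_Ioc_of_mem_Icc hu with rfl | hu
  · rw [hCzero 0 v₁ (.inl rfl), hCzero 0 v₂ (.inl rfl)]
  have hv₂ : v₂ ∈ Ioc (0 : ℝ) 1 := ⟨hv₁.1.trans_le hv, hv₂.2⟩
  rw [hCdef u hu v₁ hv₁, hCdef u hu v₂ hv₂]
  have hu₀ := (hinv_right u hu).1
  exact hanti.antitoneOn (add_nonneg hu₀ (hinv_right v₂ hv₂).1)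
    (add_nonneg hu₀ (hinv_right v₁ hv₁).1)
    (add_le_add_right (antitoneOn_inv_of_strictAntiOn hanti hinv_right hv₁ hv₂ hv) _)

theorem archimedean_volume_nonneg_of_pos (hconv : ConvexOn ℝ (Ici 0) ψ)
    (hanti : StrictAntiOn ψ (Ici 0))
    (hinv_right : ∀ u ∈ Ioc (0 : ℝ) 1, 0 ≤ ψinv u ∧ ψ (ψinv u) = u)
    (hCdef : ∀ u ∈ Ioc (0 : ℝ) 1, ∀ v ∈ Ioc (0 : ℝ) 1, C u v = ψ (ψinv u + ψinv v))
    {u₁ u₂ v₁ v₂ : ℝ} (hu₁ : 0 < u₁) (hu : u₁ ≤ u₂) (hu₂ : u₂ ≤ 1)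
    (hv₁ : 0 < v₁) (hv : v₁ ≤ v₂) (hv₂ : v₂ ≤ 1) :
    0 ≤ C u₂ v₂ - C u₁ v₂ - C u₂ v₁ + C u₁ v₁ := by
  have hu₁' : u₁ ∈ Ioc (0 : ℝ) 1 := ⟨hu₁, hu.trans hu₂⟩
  have hu₂' : u₂ ∈ Ioc (0 : ℝ) 1 := ⟨hu₁.trans_le hu, hu₂⟩
  have hv₁' : v₁ ∈ Ioc (0 : ℝ) 1 := ⟨hv₁, hv.trans hv₂⟩
  have hv₂' : v₂ ∈ Ioc (0 : ℝ) 1 := ⟨hv₁.trans_le hv, hv₂⟩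
  have hinv_anti := antitoneOn_inv_of_strictAntiOn hanti hinv_right
  set a := ψinv u₁
  set b := ψinv u₂
  set c := ψinv v₁
  set d := ψinv v₂
  have hb₀ : 0 ≤ b := (hinv_right u₂ hu₂').1
  have hd₀ : 0 ≤ d := (hinv_right v₂ hv₂').1
  have hba : b ≤ a := hinv_anti hu₁' hu₂' hu
  have hdc : d ≤ c := hinv_anti hv₁' hv₂' hv
  have key := hconv.map_add_sub_le_map_add_sub (x := b + d) (y := b + c) (h := a - b)
    (add_nonneg hb₀ hd₀) (by simp only [mem_Ici]; linarith) (by linarith) (by linarith)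
  rw [show b + d + (a - b) = a + d by ring, show b + c + (a - b) = a + c by ring] at key
  rw [hCdef u₂ hu₂' v₂ hv₂', hCdef u₁ hu₁' v₂ hv₂', hCdef u₂ hu₂' v₁ hv₁', hCdef u₁ hu₁' v₁ hv₁']
  linarith

end ArchimedeanCopula

theorem convex_generator_archimedean_copula_general (ψ ψinv : ℝ → ℝ)
    (hconv : ConvexOn ℝ (Set.Ici 0) ψ)
    (hanti : StrictAntiOn ψ (Set.Ici 0))
    (hψ0 : ψ 0 = 1)
    (hrange : ∀ t ≥ (0:ℝ), 0 < ψ t ∧ ψ t ≤ 1)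
    (hinv_left : ∀ t ≥ (0:ℝ), ψinv (ψ t) = t)
    (hinv_right : ∀ u ∈ Set.Ioc (0:ℝ) 1, 0 ≤ ψinv u ∧ ψ (ψinv u) = u)
    (C : ℝ → ℝ → ℝ)
    (hCdef : ∀ u ∈ Set.Ioc (0:ℝ) 1, ∀ v ∈ Set.Ioc (0:ℝ) 1,
      C u v = ψ (ψinv u + ψinv v))
    (hCzero : ∀ u v : ℝ, u = 0 ∨ v = 0 → C u v = 0) :
    (∀ u ∈ Set.Icc (0:ℝ) 1, C u 1 = u ∧ C 1 u = u) ∧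
      (∀ u₁ u₂ v₁ v₂ : ℝ, 0 ≤ u₁ → u₁ ≤ u₂ → u₂ ≤ 1 → 0 ≤ v₁ → v₁ ≤ v₂ → v₂ ≤ 1 →
        0 ≤ C u₂ v₂ - C u₁ v₂ - C u₂ v₁ + C u₁ v₁) := by
  have hinv_one : ψinv 1 = 0 := by simpa only [hψ0] using hinv_left 0 le_rfl
  have hnonneg : ∀ t ≥ (0:ℝ), 0 ≤ ψ t := fun t ht => (hrange t ht).1.le
  have hone : (1:ℝ) ∈ Icc (0:ℝ) 1 := right_mem_Icc.2 zero_le_one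
  refine ⟨fun u hu => ?_, fun u₁ u₂ v₁ v₂ hu₁ hu hu₂ hv₁ hv hv₂ => ?_⟩
  · have hu1 := archimedean_one_right hinv_one hinv_right hCdef hCzero hu
    exact ⟨hu1, archimedean_symm hCdef hCzero hone hu ▸ hu1⟩
  have hu₁' : u₁ ∈ Icc (0:ℝ) 1 := ⟨hu₁, hu.trans hu₂⟩
  have hu₂' : u₂ ∈ Icc (0:ℝ) 1 := ⟨hu₁.trans hu, hu₂⟩
  have hv₁' : v₁ ∈ Icc (0:ℝ) 1 := ⟨hv₁, hv.trans hv₂⟩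
  have hv₂' : v₂ ∈ Icc (0:ℝ) 1 := ⟨hv₁.trans hv, hv₂⟩
  rcases hu₁.eq_or_lt with rfl | hu₁
  · have := archimedean_monotoneOn_right hnonneg hanti hinv_right hCdef hCzero hu₂' hv₁' hv₂' hv
    rw [hCzero 0 v₂ (.inl rfl), hCzero 0 v₁ (.inl rfl)]
    linarith
  rcases hv₁.eq_or_lt with rfl | hv₁
  · have := archimedean_monotoneOn_right hnonneg hanti hinv_right hCdef hCzero hv₂' hu₁' hu₂' hu
    rw [hCzero u₂ 0 (.inr rfl), hCzero u₁ 0 (.inr rfl), archimedean_symm hCdef hCzero hu₂' hv₂',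
      archimedean_symm hCdef hCzero hu₁' hv₂']
    linarith
  exact archimedean_volume_nonneg_of_pos hconv hanti hinv_right hCdef hu₁ hu hu₂ hv₁ hv hv₂

/-- **Convex generators yield bivariate Archimedean copulas.**
Let `ψ : [0,∞) → (0,1]` be continuous, convex and strictly decreasing with
`ψ(0) = 1` and `ψ(t) → 0` as `t → ∞`, so that `ψ` is a bijection from `[0,∞)`
onto `(0,1]` with inverse `ψinv`.  Define the Archimedean copula
`C(u,v) = ψ(ψinv(u) + ψinv(v))` for `u, v ∈ (0,1]` and `C(u,v) = 0` if `u = 0`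
or `v = 0`.  Then `C` has uniform margins, `C(u,1) = u` and `C(1,v) = v`, and
`C` is 2-increasing; hence `C` is a copula. -/
theorem convex_generator_archimedean_copula (ψ ψinv : ℝ → ℝ)
    (hcont : ContinuousOn ψ (Set.Ici 0))
    (hconv : ConvexOn ℝ (Set.Ici 0) ψ)
    (hanti : StrictAntiOn ψ (Set.Ici 0))
    (hψ0 : ψ 0 = 1)
    (hlim : Tendsto ψ atTop (𝓝 0))
    (hrange : ∀ t ≥ (0:ℝ), 0 < ψ t ∧ ψ t ≤ 1)
    (hinv_left : ∀ t ≥ (0:ℝ), ψinv (ψ t) = t)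
    (hinv_right : ∀ u ∈ Set.Ioc (0:ℝ) 1, 0 ≤ ψinv u ∧ ψ (ψinv u) = u)
    (C : ℝ → ℝ → ℝ)
    (hCdef : ∀ u ∈ Set.Ioc (0:ℝ) 1, ∀ v ∈ Set.Ioc (0:ℝ) 1,
      C u v = ψ (ψinv u + ψinv v))
    (hCzero : ∀ u v : ℝ, u = 0 ∨ v = 0 → C u v = 0) :
    (∀ u ∈ Set.Icc (0:ℝ) 1, C u 1 = u ∧ C 1 u = u) ∧
      (∀ u₁ u₂ v₁ v₂ : ℝ, 0 ≤ u₁ → u₁ ≤ u₂ → u₂ ≤ 1 → 0 ≤ v₁ → v₁ ≤ v₂ → v₂ ≤ 1 →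
        0 ≤ C u₂ v₂ - C u₁ v₂ - C u₂ v₁ + C u₁ v₁) :=
  convex_generator_archimedean_copula_general ψ ψinv hconv hanti hψ0 hrange hinv_left hinv_right C
    hCdef hCzero
end
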